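/- arXiv:2504.18161 — 5 statements merged into one kernel-verified Lean document; each statement's English description precedes it below -/
import Mathlib

section
/- For any vertices v, u ∈ V, det(Ã^{v,u}(G)) = Σ_{P ∈ 𝒫_{u,v}} μ(P) · det(Ã(G[V \ V(P)])), where the sum is over all simple u→v paths P in G. -/
/-!
Expand both sides by the Leibniz formula. Row `v` of `Ã^{v,u}` is the unit vector at column `u`
and column `u` vanishes elsewhere, so a permutation `σ` contributes only if `σ u = v`. Following
the cycle of `σ` through `u` backwards gives a simple path `P` from `u` to `v` whose edges carry
the nonzero entries, and `σ` factors as this cycle, of sign `(-1)^ℓ`, times a permutation `τ` of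
the vertices off `P`. Conversely every pair `(P, τ)` arises this way, exactly once, and the term
of `σ` is `μ(P)` times the Leibniz term of `τ` in `det Ã(G[V ∖ V(P)])`.
-/

open MvPolynomial

/-- The symbolic adjacency matrix of a digraph on `Fin n`. -/
noncomputable def symbAdj (n : ℕ) (F : Type) [Field F]
    (E : Fin n → Fin n → Prop) [DecidableRel E] :
    Matrix (Fin n) (Fin n) (MvPolynomial (Fin n × Fin n) F) :=
  Matrix.of fun u v => if E u v then X (u, v) else 0

/-- `Ã^{v,u}(G)`: the matrix obtained from `Ã(G)` by zeroing all entries in row `v`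
and column `u` and setting the entry `(v,u)` to `1`. -/
noncomputable def modMat (n : ℕ) (F : Type) [Field F]
    (E : Fin n → Fin n → Prop) [DecidableRel E] (v u : Fin n) :
    Matrix (Fin n) (Fin n) (MvPolynomial (Fin n × Fin n) F) :=
  Matrix.of fun a b =>
    if a = v then (if b = u then 1 else 0)
    else if b = u then 0 else symbAdj n F E a b

/-- A simple `u → v` path in `G`: an injective sequence of `ℓ+1` vertices starting at
`u`, ending at `v`, with consecutive pairs being edges of `G`. -/
abbrev SPath (n : ℕ) (E : Fin n → Fin n → Prop) [DecidableRel E] (u v : Fin n) :=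
  Σ ℓ : Fin n, {f : Fin ((ℓ : ℕ) + 1) → Fin n //
    Function.Injective f ∧ f 0 = u ∧ f (Fin.last (ℓ : ℕ)) = v ∧
      ∀ i : Fin (ℓ : ℕ), E (f i.castSucc) (f i.succ)}

namespace Equiv.Perm

variable {α : Type*} {k : ℕ}

lemma inv_pow_apply_zero_eq {σ : Perm α} {f : Fin (k + 1) → α}
    (h : ∀ i : Fin k, σ (f i.succ) = f i.castSucc) (j : Fin (k + 1)) :
    (σ⁻¹ ^ (j : ℕ)) (f 0) = f j := by
  induction j using Fin.induction with
  | zero => rfl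
  | succ i ih =>
    rw [Fin.val_succ, pow_succ', mul_apply, ← Fin.val_castSucc, ih, inv_eq_iff_eq, h]

section

variable [DecidableEq α]

def pathCycle (f : Fin (k + 1) → α) (hf : Function.Injective f) : Perm α :=
  viaFintypeEmbedding (finRotate (k + 1)).symm ⟨f, hf⟩

lemma pathCycle_apply_succ {f : Fin (k + 1) → α} (hf : Function.Injective f) (i : Fin k) :
    pathCycle f hf (f i.succ) = f i.castSucc := by
  have h := viaFintypeEmbedding_apply_image (finRotate (k + 1)).symm ⟨f, hf⟩ i.succ
  rw [(Equiv.symm_apply_eq _).mpr (by rw [finRotate_apply, Fin.coeSucc_eq_succ])] at h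
  exact h

lemma pathCycle_apply_zero {f : Fin (k + 1) → α} (hf : Function.Injective f) :
    pathCycle f hf (f 0) = f (Fin.last k) := by
  have h := viaFintypeEmbedding_apply_image (finRotate (k + 1)).symm ⟨f, hf⟩ 0
  rw [(Equiv.symm_apply_eq _).mpr finRotate_last.symm] at h
  exact h

lemma sign_pathCycle [Fintype α] {f : Fin (k + 1) → α} (hf : Function.Injective f) :
    sign (pathCycle f hf) = (-1) ^ k := by
  rw [pathCycle, viaFintypeEmbedding_sign, sign_symm, sign_finRotate, Nat.add_sub_cancel]

def pathPerm (f : Fin (k + 1) → α) (hf : Function.Injective f)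
    (τ : Perm {w // ∀ i, f i ≠ w}) : Perm α :=
  pathCycle f hf * ofSubtype τ

section pathPerm

variable {f : Fin (k + 1) → α} (hf : Function.Injective f) (τ : Perm {w // ∀ i, f i ≠ w})

lemma pathPerm_apply_eq_pathCycle (j : Fin (k + 1)) :
    pathPerm f hf τ (f j) = pathCycle f hf (f j) := by
  rw [pathPerm, mul_apply, ofSubtype_apply_of_not_mem τ (by simp)]

lemma pathPerm_apply_succ (i : Fin k) : pathPerm f hf τ (f i.succ) = f i.castSucc := by
  rw [pathPerm_apply_eq_pathCycle, pathCycle_apply_succ]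

lemma pathPerm_apply_zero : pathPerm f hf τ (f 0) = f (Fin.last k) := by
  rw [pathPerm_apply_eq_pathCycle, pathCycle_apply_zero]

lemma pathPerm_apply_of_forall_ne {w : α} (hw : ∀ i, f i ≠ w) :
    pathPerm f hf τ w = τ ⟨w, hw⟩ := by
  rw [pathPerm, mul_apply, ofSubtype_apply_of_mem τ hw]
  exact viaFintypeEmbedding_apply_notMem_range _ _ (by rintro ⟨i, hi⟩; exact (τ ⟨w, hw⟩).2 i hi)

lemma sign_pathPerm [Fintype α] : sign (pathPerm f hf τ) = (-1) ^ k * sign τ := by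
  rw [pathPerm, map_mul, sign_pathCycle, sign_ofSubtype]

lemma pathPerm_injective : Function.Injective (pathPerm f hf) := fun _ _ h =>
  ofSubtype_injective (mul_left_cancel h)

end pathPerm

lemma length_eq_of_pathPerm_eq {l : ℕ} {f : Fin (k + 1) → α} {g : Fin (l + 1) → α}
    (hf : Function.Injective f) (hg : Function.Injective g)
    {τ : Perm {w // ∀ i, f i ≠ w}} {τ' : Perm {w // ∀ i, g i ≠ w}}
    (h : pathPerm f hf τ = pathPerm g hg τ') (h0 : f 0 = g 0)
    (hlast : f (Fin.last k) = g (Fin.last l)) : k = l := by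
  wlog hkl : k ≤ l generalizing k l
  · exact (this hg hf h.symm h0.symm hlast.symm (by omega)).symm
  have hk : g ⟨k, by omega⟩ = g (Fin.last l) := by
    rw [← hlast, ← inv_pow_apply_zero_eq (pathPerm_apply_succ hg τ'), ← h0, ← h,
      ← inv_pow_apply_zero_eq (pathPerm_apply_succ hf τ) (Fin.last k), Fin.val_last]
  exact congrArg Fin.val (hg hk)

lemma exists_pathPerm_eq_of_forall_apply_eq (σ : Perm α) {f : Fin (k + 1) → α}
    (hf : Function.Injective f) (h : ∀ j, σ (f j) = pathCycle f hf (f j)) :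
    ∃ τ, pathPerm f hf τ = σ := by
  set ρ := (pathCycle f hf)⁻¹ * σ
  have hρ : ∀ j, ρ (f j) = f j := fun j => by
    simp only [ρ, mul_apply, h, coe_inv, symm_apply_apply]
  have hmem : ∀ w, (∀ i, f i ≠ ρ w) ↔ ∀ i, f i ≠ w := fun w => forall_congr' fun i => by
    have := ρ.injective.ne_iff (x := f i) (y := w)
    rwa [hρ] at this
  refine ⟨ρ.subtypePerm hmem, ?_⟩
  rw [pathPerm, ofSubtype_subtypePerm]
  · exact mul_inv_cancel_left _ _
  · rintro w hw i rfl
    exact hw (hρ i)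

lemma exists_pathPerm_eq [Finite α] (σ : Perm α) (u : α) :
    ∃ (k : ℕ) (f : Fin (k + 1) → α) (hf : Function.Injective f)
      (τ : Perm {w // ∀ i, f i ≠ w}), f 0 = u ∧ pathPerm f hf τ = σ := by
  obtain ⟨k, hk⟩ : ∃ k, Function.minimalPeriod σ.symm u = k + 1 :=
    Nat.exists_eq_succ_of_ne_zero (Function.minimalPeriod_pos_of_mem_periodicPts
      (σ.symm.injective.mem_periodicPts u)).ne'
  set f : Fin (k + 1) → α := fun j => σ.symm^[j] u
  have hf : Function.Injective f := fun i j hij => Fin.ext <|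
    Function.iterate_injOn_Iio_minimalPeriod (by simp [hk, Fin.is_le]) (by simp [hk, Fin.is_le])
      hij
  have hstep : ∀ i : Fin k, σ (f i.succ) = f i.castSucc := fun i => by
    simp only [f, Fin.val_succ, Function.iterate_succ_apply', apply_symm_apply, Fin.val_castSucc]
  have hlast : σ (f 0) = f (Fin.last k) := by
    have := Function.iterate_minimalPeriod (f := σ.symm) (x := u)
    rw [hk, Function.iterate_succ_apply', symm_apply_eq] at this
    exact this.symm
  obtain ⟨τ, hτ⟩ := exists_pathPerm_eq_of_forall_apply_eq σ hf fun j => by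
    cases j using Fin.cases with
    | zero => rw [pathCycle_apply_zero, hlast]
    | succ i => rw [pathCycle_apply_succ, hstep]
  exact ⟨k, f, hf, τ, rfl, hτ⟩

end

end Equiv.Perm

lemma Fintype.prod_eq_prod_comp_mul_prod_forall_ne {ι α M : Type*} [Fintype ι] [Fintype α]
    [DecidableEq α] [CommMonoid M] {f : ι → α} (hf : Function.Injective f)
    [Fintype {w // ∀ i, f i ≠ w}] (g : α → M) :
    ∏ x, g x = (∏ i, g (f i)) * ∏ w : {w // ∀ i, f i ≠ w}, g w := by
  rw [← Finset.prod_mul_prod_compl (Finset.univ.map ⟨f, hf⟩), Finset.prod_map,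
    Finset.prod_subtype _ (p := fun w => ∀ i, f i ≠ w) (by simp)]
  rfl

section PathExpansion

open Equiv Equiv.Perm MvPolynomial

variable {n : ℕ} {F : Type} [Field F] {E : Fin n → Fin n → Prop} [DecidableRel E] {v u : Fin n}

lemma symbAdj_apply_of_adj {a b : Fin n} (h : E a b) : symbAdj n F E a b = X (a, b) := by
  simp [symbAdj, h]

lemma adj_of_symbAdj_ne_zero {a b : Fin n} (h : symbAdj n F E a b ≠ 0) : E a b := by
  by_contra hab
  simp [symbAdj, hab] at h

lemma modMat_apply_self : modMat n F E v u v u = 1 := by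
  simp [modMat]

lemma modMat_apply_of_ne {a b : Fin n} (ha : a ≠ v) (hb : b ≠ u) :
    modMat n F E v u a b = symbAdj n F E a b := by
  simp [modMat, ha, hb]

lemma eq_of_modMat_apply_ne_zero {a : Fin n} (h : modMat n F E v u a u ≠ 0) : a = v := by
  by_contra ha
  simp [modMat, ha] at h

lemma sign_smul_prod_modMat_pathPerm {k : ℕ} {f : Fin (k + 1) → Fin n}
    (hf : Function.Injective f) (h0 : f 0 = u) (hlast : f (Fin.last k) = v)
    (hE : ∀ i : Fin k, E (f i.castSucc) (f i.succ)) (τ : Perm {w // ∀ i, f i ≠ w}) :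
    sign (pathPerm f hf τ) • ∏ a, modMat n F E v u (pathPerm f hf τ a) a =
      (∏ i : Fin k, -X (f i.castSucc, f i.succ)) * (sign τ • ∏ b, symbAdj n F E (τ b) b) := by
  have hpath : ∏ j, modMat n F E v u (pathPerm f hf τ (f j)) (f j) =
      ∏ i : Fin k, X (f i.castSucc, f i.succ) := by
    rw [Fin.prod_univ_succ, pathPerm_apply_zero, hlast, h0, modMat_apply_self, one_mul]
    refine Finset.prod_congr rfl fun i _ => ?_
    rw [pathPerm_apply_succ, modMat_apply_of_ne, symbAdj_apply_of_adj (hE i)]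
    · exact hlast ▸ hf.ne (Fin.castSucc_lt_last i).ne
    · exact h0 ▸ hf.ne (Fin.succ_ne_zero i)
  have hoff : ∀ b : {w // ∀ i, f i ≠ w},
      modMat n F E v u (pathPerm f hf τ b) b = symbAdj n F E (τ b) b := fun b => by
    rw [pathPerm_apply_of_forall_ne hf τ b.2, modMat_apply_of_ne]
    · exact hlast ▸ ((τ b).2 (Fin.last k)).symm
    · exact h0 ▸ (b.2 0).symm
  rw [Fintype.prod_eq_prod_comp_mul_prod_forall_ne hf, hpath,
    Finset.prod_congr rfl fun b _ => hoff b, sign_pathPerm, Finset.prod_neg, Finset.card_univ,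
    Fintype.card_fin]
  simp only [Units.smul_def, Units.val_mul, Units.val_pow_eq_pow_val, Units.val_neg,
    Units.val_one, zsmul_eq_mul]
  push_cast
  ring

lemma exists_pathPerm_eq_of_modMat_ne_zero (σ : Perm (Fin n))
    (hσ : ∀ a, modMat n F E v u (σ a) a ≠ 0) :
    ∃ P : Σ P : SPath n E u v, Perm {w // ∀ i, P.2.1 i ≠ w},
      pathPerm P.1.2.1 P.1.2.2.1 P.2 = σ := by
  obtain ⟨k, f, hf, τ, h0, rfl⟩ := exists_pathPerm_eq σ u
  have hlast : f (Fin.last k) = v := by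
    rw [← pathPerm_apply_zero hf τ, h0]
    exact eq_of_modMat_apply_ne_zero (hσ u)
  have hE : ∀ i : Fin k, E (f i.castSucc) (f i.succ) := fun i => by
    have hi := hσ (f i.succ)
    rw [pathPerm_apply_succ, modMat_apply_of_ne (hlast ▸ hf.ne (Fin.castSucc_lt_last i).ne)
      (h0 ▸ hf.ne (Fin.succ_ne_zero i))] at hi
    exact adj_of_symbAdj_ne_zero hi
  have hk : k < n := by simpa using Fintype.card_le_of_injective f hf
  exact ⟨⟨⟨⟨k, hk⟩, f, hf, h0, hlast, hE⟩, τ⟩, rfl⟩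

lemma pathPerm_sigma_injective :
    Function.Injective fun P : Σ P : SPath n E u v, Perm {w // ∀ i, P.2.1 i ≠ w} =>
      pathPerm P.1.2.1 P.1.2.2.1 P.2 := by
  rintro ⟨⟨ℓ, f, hf, h0, hlast, _⟩, τ⟩ ⟨⟨ℓ', g, hg, h0', hlast', _⟩, τ'⟩ h
  replace h : pathPerm f hf τ = pathPerm g hg τ' := h
  obtain rfl : ℓ = ℓ' :=
    Fin.ext (length_eq_of_pathPerm_eq hf hg h (h0.trans h0'.symm) (hlast.trans hlast'.symm))
  obtain rfl : f = g := funext fun j => by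
    rw [← inv_pow_apply_zero_eq (pathPerm_apply_succ hf τ),
      ← inv_pow_apply_zero_eq (pathPerm_apply_succ hg τ'), h, h0, h0']
  obtain rfl := pathPerm_injective hf h
  rfl

end PathExpansion

theorem det_modMat_eq_sum_paths_general (n : ℕ) (F : Type) [Field F]
    (E : Fin n → Fin n → Prop) [DecidableRel E]
    (v u : Fin n) :
    (modMat n F E v u).det =
      ∑ P : SPath n E u v,
        (∏ i : Fin ((P.1 : ℕ)), -X ((P.2.1 i.castSucc, P.2.1 i.succ))) *
        ((symbAdj n F E).submatrix
          (fun a : {w : Fin n // ∀ i, P.2.1 i ≠ w} => a.1)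
          (fun b : {w : Fin n // ∀ i, P.2.1 i ≠ w} => b.1)).det := by
  simp only [Matrix.det_apply, Matrix.submatrix_apply, Finset.mul_sum]
  rw [Finset.sum_sigma', Finset.univ_sigma_univ]
  refine (Finset.sum_bij_ne_zero (fun P _ _ => Equiv.Perm.pathPerm P.1.2.1 P.1.2.2.1 P.2)
    (fun _ _ _ => Finset.mem_univ _)
    (fun _ _ _ _ _ _ h => by exact pathPerm_sigma_injective h) ?_ ?_).symm
  · intro σ _ hσ
    have hentry : ∀ a, modMat n F E v u (σ a) a ≠ 0 := fun a =>
      Finset.prod_ne_zero_iff.mp (right_ne_zero_of_smul hσ) a (Finset.mem_univ a)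
    obtain ⟨P, hP⟩ := exists_pathPerm_eq_of_modMat_ne_zero σ hentry
    obtain ⟨hf, h0, hlast, hE⟩ := P.1.2.2
    refine ⟨P, Finset.mem_univ _, ?_, hP⟩
    rwa [← sign_smul_prod_modMat_pathPerm hf h0 hlast hE, hP]
  · rintro ⟨⟨ℓ, f, hf, h0, hlast, hE⟩, τ⟩ _ _
    exact (sign_smul_prod_modMat_pathPerm hf h0 hlast hE τ).symm

/-- `det(Ã^{v,u}(G)) = ∑_{P ∈ 𝒫_{u,v}} μ(P) · det(Ã(G[V ∖ V(P)]))`, where the sum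
ranges over all simple `u → v` paths `P`, `μ(P) = ∏ (−x_{edge})` over the edges of `P`,
and `G[V ∖ V(P)]` is the induced subgraph on the vertices off `P`. -/
theorem det_modMat_eq_sum_paths (n : ℕ) (F : Type) [Field F]
    (E : Fin n → Fin n → Prop) [DecidableRel E] (hloop : ∀ w, E w w)
    (v u : Fin n) :
    (modMat n F E v u).det =
      ∑ P : SPath n E u v,
        (∏ i : Fin ((P.1 : ℕ)), -X ((P.2.1 i.castSucc, P.2.1 i.succ))) *
        ((symbAdj n F E).submatrix
          (fun a : {w : Fin n // ∀ i, P.2.1 i ≠ w} => a.1)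
          (fun b : {w : Fin n // ∀ i, P.2.1 i ≠ w} => b.1)).det :=
  det_modMat_eq_sum_paths_general n F E v u
end

section
/- For any vertices u, v ∈ V, the rational function Ã(G)^{-1}_{u,v} is identically zero if and only if there is no u→v path in G. Equivalently, Ã(G)^{-1}_{u,v} ≢ 0 iff v is reachable from u. -/
open MvPolynomial

/-- The symbolic adjacency matrix viewed over the field of multivariate rational
functions (the fraction field of the polynomial ring). -/
noncomputable def symbAdjK (n : ℕ) (F : Type) [Field F]
    (E : Fin n → Fin n → Prop) [DecidableRel E] :
    Matrix (Fin n) (Fin n) (FractionRing (MvPolynomial (Fin n × Fin n) F)) :=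
  (symbAdj n F E).map (algebraMap (MvPolynomial (Fin n × Fin n) F)
    (FractionRing (MvPolynomial (Fin n × Fin n) F)))

/-!
Since `Ã⁻¹ = (det Ã)⁻¹ • adj Ã`, the entry `(u, v)` vanishes iff the cofactor `adj Ã u v`, the
determinant of `Ã` with row `v` replaced by `e_u`, is the zero polynomial. Every term of that
determinant comes from a permutation `σ` with `σ v = u` and `i → σ i` an edge for all `i ≠ v`;
if such a `σ` exists, evaluating `x_{ij}` at `[σ i = j]` turns the matrix into the permutation
matrix of `σ`, so the cofactor is nonzero (`σ = 1` shows `det Ã ≠ 0` the same way). Such a `σ`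
exists iff `v` is reachable from `u`: a simple path `u → ⋯ → v` closed up by `v ↦ u` is one, and
conversely the `σ`-orbit of `u` is a walk that reaches `v`.
-/

theorem List.exists_nodup_isChain_cons_of_relationReflTransGen {α : Type*} {r : α → α → Prop}
    {a b : α} (h : Relation.ReflTransGen r a b) :
    ∃ l, IsChain r (a :: l) ∧ getLast (a :: l) (cons_ne_nil _ _) = b ∧ (a :: l).Nodup := by
  induction h using Relation.ReflTransGen.head_induction_on with
  | refl => exact ⟨[], .singleton _, rfl, nodup_singleton _⟩
  | @head a c hac _ ih =>
    obtain ⟨l, hchain, hlast, hnodup⟩ := ih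
    by_cases hmem : a ∈ c :: l
    · obtain ⟨s, t, hst⟩ := append_of_mem hmem
      rw [hst] at hchain hnodup
      refine ⟨t, hchain.right_of_append, ?_, hnodup.of_append_right⟩
      simpa [hst] using hlast
    · exact ⟨c :: l, hchain.cons_cons hac, by rwa [getLast_cons_cons],
        nodup_cons.2 ⟨hmem, hnodup⟩⟩

section
variable {α : Type*} {r : α → α → Prop} {u v : α}

theorem Relation.ReflTransGen.exists_perm [DecidableEq α] (hrefl : ∀ a, r a a)
    (h : ReflTransGen r u v) :
    ∃ σ : Equiv.Perm α, σ v = u ∧ ∀ i ≠ v, r i (σ i) := by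
  obtain ⟨l, hchain, hlast, hnodup⟩ := List.exists_nodup_isChain_cons_of_relationReflTransGen h
  refine ⟨(u :: l).formPerm, hlast ▸ List.formPerm_apply_getLast u l, fun i hi => ?_⟩
  by_cases hmem : i ∈ u :: l
  · obtain ⟨k, hk, rfl⟩ := List.getElem_of_mem hmem
    have hk1 : k + 1 < (u :: l).length := by
      by_contra!
      apply hi
      rw [← hlast, List.getLast_eq_getElem]
      congr 1
      omega
    rw [List.formPerm_apply_lt_getElem _ hnodup k hk1]
    exact hchain.getElem k hk1
  · rw [List.formPerm_apply_of_notMem hmem]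
    exact hrefl i

theorem Relation.reflTransGen_of_perm_apply_eq [Finite α] (σ : Equiv.Perm α) (hσ : σ v = u)
    (h : ∀ i ≠ v, r i (σ i)) : ReflTransGen r u v := by
  have along_orbit : ∀ (k : ℕ) (x : α), (σ ^ k) x = v → ReflTransGen r x v := by
    intro k
    induction k with
    | zero => rintro x rfl; exact .refl
    | succ k ih =>
      intro x hx
      by_cases hxv : x = v
      · exact hxv ▸ .refl
      · exact .head (h x hxv) (ih (σ x) (by rwa [pow_succ, Equiv.Perm.mul_apply] at hx))
  have hcycle : σ.SameCycle u v := Equiv.Perm.SameCycle.symm ⟨1, by simp [hσ]⟩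
  obtain ⟨k, hk⟩ := hcycle.exists_nat_pow_eq
  exact along_orbit k u hk

theorem Relation.reflTransGen_iff_exists_perm [Finite α] (hrefl : ∀ a, r a a) :
    ReflTransGen r u v ↔ ∃ σ : Equiv.Perm α, σ v = u ∧ ∀ i ≠ v, r i (σ i) := by
  classical
  exact ⟨ReflTransGen.exists_perm hrefl, fun ⟨σ, hσ, h⟩ => reflTransGen_of_perm_apply_eq σ hσ h⟩

end

namespace Matrix

variable {n R : Type*} [Fintype n] [DecidableEq n]

theorem det_eq_zero_of_forall_perm_exists_eq_zero [CommRing R] {M : Matrix n n R}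
    (h : ∀ σ : Equiv.Perm n, ∃ i, M i (σ i) = 0) : M.det = 0 := by
  rw [← det_transpose, det_apply]
  refine Finset.sum_eq_zero fun σ _ => ?_
  obtain ⟨i, hi⟩ := h σ
  rw [Finset.prod_eq_zero (Finset.mem_univ i) hi, smul_zero]

theorem det_ne_zero_of_map_eq_permMatrix {S : Type*} [CommRing R] [CommRing S] [Nontrivial S]
    (f : R →+* S) {M : Matrix n n R} (σ : Equiv.Perm n) (h : M.map f = σ.permMatrix S) :
    M.det ≠ 0 := by
  intro h0
  have : (σ.permMatrix S).det = 0 := by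
    rw [← h, ← RingHom.mapMatrix_apply, ← RingHom.map_det, h0, map_zero]
  rw [det_permutation] at this
  exact ((Equiv.Perm.sign σ).isUnit.map (Int.castRingHom S)).ne_zero this

theorem map_inv_apply_ne_zero_iff {K : Type*} [CommRing R] [Field K] {f : R →+* K}
    (hf : Function.Injective f) {M : Matrix n n R} (hM : M.det ≠ 0) (i j : n) :
    (M.map f)⁻¹ i j ≠ 0 ↔ M.adjugate i j ≠ 0 := by
  rw [inv_def, ← RingHom.mapMatrix_apply, ← RingHom.map_det, ← RingHom.map_adjugate,
    smul_apply, RingHom.mapMatrix_apply, map_apply, smul_eq_mul, Ring.inverse_eq_inv',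
    mul_ne_zero_iff, map_ne_zero_iff f hf]
  exact and_iff_right (inv_ne_zero ((map_ne_zero_iff f hf).2 hM))

end Matrix

section
variable {n : ℕ} {F : Type} [Field F] {E : Fin n → Fin n → Prop} [DecidableRel E]

theorem symbAdj_map_eval_apply (σ : Equiv.Perm (Fin n)) {i : Fin n} (hi : E i (σ i))
    (j : Fin n) :
    (symbAdj n F E).map (eval fun p => if σ p.1 = p.2 then 1 else 0) i j =
      σ.permMatrix F i j := by
  by_cases hj : σ i = j
  · subst hj; simp [symbAdj, hi, Equiv.Perm.permMatrix, PEquiv.toMatrix_apply]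
  · by_cases hE : E i j <;> simp [symbAdj, hE, hj, Equiv.Perm.permMatrix, PEquiv.toMatrix_apply]

theorem symbAdj_det_ne_zero (hloop : ∀ w, E w w) : (symbAdj n F E).det ≠ 0 :=
  Matrix.det_ne_zero_of_map_eq_permMatrix (eval _) 1 <| by
    ext i j
    exact symbAdj_map_eval_apply 1 (hloop i) j

theorem symbAdj_adjugate_ne_zero_iff (u v : Fin n) :
    (symbAdj n F E).adjugate u v ≠ 0 ↔
      ∃ σ : Equiv.Perm (Fin n), σ v = u ∧ ∀ i ≠ v, E i (σ i) := by
  rw [Matrix.adjugate_apply]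
  constructor
  · contrapose!
    intro h
    refine Matrix.det_eq_zero_of_forall_perm_exists_eq_zero fun σ => ?_
    by_cases hσ : σ v = u
    · obtain ⟨i, hiv, hi⟩ := h σ hσ
      exact ⟨i, by simp [Matrix.updateRow_ne hiv, symbAdj, hi]⟩
    · exact ⟨v, by simp [hσ]⟩
  · rintro ⟨σ, hσ, hE⟩
    refine Matrix.det_ne_zero_of_map_eq_permMatrix
      (eval fun p => if σ p.1 = p.2 then 1 else 0) σ ?_
    ext i j
    by_cases hi : i = v
    · subst hi
      simp [Pi.single_apply, Equiv.Perm.permMatrix, PEquiv.toMatrix_apply, hσ, eq_comm]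
    · rw [Matrix.map_apply, Matrix.updateRow_ne hi]
      exact symbAdj_map_eval_apply σ (hE i hi) j

end

/-- For a digraph with a self-loop at every vertex, the rational function
`Ã(G)⁻¹_{u,v}` is nonzero iff `v` is reachable from `u` in `G`. -/
theorem symbAdj_inv_ne_zero_iff_reachable (n : ℕ) (F : Type) [Field F]
    (E : Fin n → Fin n → Prop) [DecidableRel E] (hloop : ∀ w, E w w)
    (u v : Fin n) :
    (symbAdjK n F E)⁻¹ u v ≠ 0 ↔ Relation.ReflTransGen E u v := by
  rw [symbAdjK, Matrix.map_inv_apply_ne_zero_iff (IsFractionRing.injective _ _)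
    (symbAdj_det_ne_zero hloop), symbAdj_adjugate_ne_zero_iff,
    Relation.reflTransGen_iff_exists_perm hloop]
end

section
/- Let P be a simple r→t path in G passing through an SCC Y with Y ∉ {R, T}, where R is the SCC of r, T is the SCC of t, and F is the set of all edges from R to T. Then P uses no edge of F, and the polynomial det(Ã(G)) · det(Ã^{t,r}(G)) contains the monomial (∏_{i∈V} x_{i,i}) · μ(P) · (∏_{i ∈ V∖V(P)} x_{i,i}), which contains no variable x_{u,v} with uv ∈ F; hence det(Ã(G)) · det(Ã^{t,r}(G)) ≢ −Σ_{uv∈F} x_{u,v} · det(Ã^{u,r}(G)) · det(Ã^{t,v}(G)), since every monomial of the right-hand side contains some variable x_{u,v} with uv ∈ F. -/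
open MvPolynomial

/-!
Expand both determinants over permutations: the pair `(σ, σ')` contributes `± ∏ᵢ x_{σ i, i} ·
∏_{i ≠ r} x_{σ' i, i}`. The monomial of `P` comes from exactly one pair, `σ = 1` and `σ'` the
rotation sending each vertex of `P` to its predecessor and `r` to `t`: every `σ` compatible with
that monomial fixes a vertex or moves it one step back along `P`, and a permutation that only
lowers the position along `P` is the identity. So its coefficient is `±1`. As `P` visits a
vertex outside `R ∪ T` and strong components are closed under walks between their vertices, `P`
never steps from `R` to `T`, so this monomial avoids the variables of `F`, each of which divides
every monomial of the right-hand side.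
-/

open Finset

section Exponent

variable {α β : Type*}

noncomputable def termExponent (σ : α → β) (s : Finset α) : β × α →₀ ℕ :=
  ∑ i ∈ s, Finsupp.single (σ i, i) 1

lemma sum_single_apply_eq_zero {ι γ : Type*} {s : Finset ι} {g : ι → γ} {e : γ}
    (h : ∀ i ∈ s, g i ≠ e) : (∑ i ∈ s, Finsupp.single (g i) 1 : γ →₀ ℕ) e = 0 := by
  rw [Finsupp.finsetSum_apply]
  exact sum_eq_zero fun i hi => Finsupp.single_eq_of_ne (h i hi).symm

lemma termExponent_apply_self_ne_zero {σ : α → β} {s : Finset α} {i : α} (hi : i ∈ s) :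
    termExponent σ s (σ i, i) ≠ 0 := by
  rw [termExponent, Finsupp.finsetSum_apply]
  exact (sum_pos' (fun _ _ => Nat.zero_le _) ⟨i, hi, by simp⟩).ne'

lemma exists_eq_of_termExponent_apply_ne_zero {σ : α → β} {s : Finset α} {p : β × α}
    (h : termExponent σ s p ≠ 0) : ∃ i ∈ s, (σ i, i) = p := by
  by_contra! hp
  exact h (sum_single_apply_eq_zero hp)

lemma eqOn_of_termExponent_eq {σ τ : α → β} {s : Finset α}
    (h : termExponent σ s = termExponent τ s) : Set.EqOn σ τ s := by
  intro i hi
  obtain ⟨j, -, hj⟩ :=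
    exists_eq_of_termExponent_apply_ne_zero (h ▸ termExponent_apply_self_ne_zero (σ := σ) hi)
  obtain ⟨hστ, rfl⟩ := Prod.mk.inj hj
  exact hστ.symm

end Exponent

lemma Equiv.Perm.eq_one_of_apply_lt {α : Type*} [Fintype α] (σ : Equiv.Perm α) (g : α → ℕ)
    (h : ∀ i, σ i ≠ i → g (σ i) < g i) : σ = 1 := by
  by_contra hσ
  obtain ⟨i, hi⟩ : ∃ i, σ i ≠ i := by simpa [Equiv.ext_iff] using hσ
  have hle : ∀ j ∈ univ, g (σ j) ≤ g j := fun j _ =>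
    (eq_or_ne (σ j) j).elim (fun e => by rw [e]) fun e => (h j e).le
  exact (sum_lt_sum hle ⟨i, mem_univ i, h i hi⟩).ne (Equiv.sum_comp σ g)

lemma eq_one_and_eq_of_termExponent_add_eq {α : Type*} [Fintype α] [DecidableEq α]
    {σ σ' ρ : Equiv.Perm α} {r : α} (g : α → ℕ) (hg : ∀ i ≠ r, ρ i ≠ i → g (ρ i) < g i)
    (hr : σ' r = ρ r)
    (h : termExponent σ univ + termExponent σ' (univ.erase r) =
      termExponent (1 : Equiv.Perm α) univ + termExponent ρ (univ.erase r)) :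
    σ = 1 ∧ σ' = ρ := by
  obtain rfl : σ = 1 := by
    refine σ.eq_one_of_apply_lt g fun i hi => ?_
    have hne : (termExponent (1 : Equiv.Perm α) univ + termExponent ρ (univ.erase r))
        (σ i, i) ≠ 0 := by
      have := termExponent_apply_self_ne_zero (σ := σ) (mem_univ i)
      rw [← h, Finsupp.add_apply]
      omega
    have hdiag : termExponent (1 : Equiv.Perm α) univ (σ i, i) = 0 :=
      sum_single_apply_eq_zero fun j _ hj => hi <| by
        obtain ⟨h1, rfl⟩ := Prod.mk.inj hj
        exact h1.symm
    rw [Finsupp.add_apply, hdiag, zero_add] at hne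
    obtain ⟨j, hj, hji⟩ := exists_eq_of_termExponent_apply_ne_zero hne
    obtain ⟨hρσ, rfl⟩ := Prod.mk.inj hji
    rw [← hρσ] at hi ⊢
    exact hg j (ne_of_mem_erase hj) hi
  refine ⟨rfl, Equiv.ext fun i => ?_⟩
  rcases eq_or_ne i r with rfl | hir
  · exact hr
  · exact eqOn_of_termExponent_eq (add_left_cancel h) (mem_erase.2 ⟨hir, mem_univ i⟩)

section Path

variable {α : Type*} {ℓ : ℕ} {f : Fin (ℓ + 1) → α}

noncomputable def pathRotation (hf : Function.Injective f) : Equiv.Perm α :=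
  Equiv.Perm.viaEmbedding (finRotate (ℓ + 1)).symm ⟨f, hf⟩

variable (hf : Function.Injective f)

lemma pathRotation_apply (j : Fin (ℓ + 1)) :
    pathRotation hf (f j) = f ((finRotate (ℓ + 1)).symm j) :=
  Equiv.Perm.viaEmbedding_apply _ ⟨f, hf⟩ j

lemma pathRotation_apply_zero : pathRotation hf (f 0) = f (Fin.last ℓ) := by
  rw [pathRotation_apply, (Equiv.symm_apply_eq _).2 (finRotate_last).symm]

lemma pathRotation_apply_succ (m : Fin ℓ) : pathRotation hf (f m.succ) = f m.castSucc := by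
  rw [pathRotation_apply, (Equiv.symm_apply_eq _).2 (by rw [finRotate_apply, Fin.coeSucc_eq_succ])]

lemma pathRotation_apply_of_forall_ne {w : α} (hw : ∀ j, f j ≠ w) : pathRotation hf w = w :=
  Equiv.Perm.viaEmbedding_apply_of_notMem _ _ w fun ⟨j, hj⟩ => hw j hj

lemma invFun_pathRotation_lt {i : α} (hi : i ≠ f 0) (hρi : pathRotation hf i ≠ i) :
    Function.invFun f (pathRotation hf i) < Function.invFun f i := by
  obtain ⟨j, rfl⟩ : ∃ j, f j = i := by
    by_contra! h
    exact hρi (pathRotation_apply_of_forall_ne hf h)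
  rw [pathRotation_apply, Function.leftInverse_invFun hf, Function.leftInverse_invFun hf]
  exact (finRotate_symm_lt_iff_ne_zero j).2 (by rintro rfl; exact hi rfl)

variable [Fintype α] [DecidableEq α]

lemma termExponent_pathRotation :
    termExponent (pathRotation hf) (univ.erase (f 0)) =
      (∑ m : Fin ℓ, Finsupp.single (f m.castSucc, f m.succ) 1) +
        ∑ w ∈ univ.filter (fun w => ∀ i, f i ≠ w), Finsupp.single (w, w) 1 := by
  have hpath : univ.filter (fun w => ¬∀ i, f i ≠ w) = univ.map ⟨f, hf⟩ := by
    ext w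
    simp
  have hoff : ∀ w ∈ univ.filter (fun w => ∀ i, f i ≠ w),
      Finsupp.single (pathRotation hf w, w) 1 = Finsupp.single (w, w) 1 := fun w hw => by
    rw [pathRotation_apply_of_forall_ne hf (mem_filter.1 hw).2]
  apply add_left_cancel (a := Finsupp.single (f (Fin.last ℓ), f 0) 1)
  rw [← pathRotation_apply_zero hf, termExponent,
    add_sum_erase univ (fun i => Finsupp.single (pathRotation hf i, i) 1) (mem_univ (f 0)),
    ← sum_filter_not_add_sum_filter univ (fun w => ∀ i, f i ≠ w), sum_congr rfl hoff, hpath,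
    sum_map, Fin.sum_univ_succ]
  simp only [Function.Embedding.coeFn_mk, pathRotation_apply_succ hf, add_assoc]

noncomputable def pathExponent (f : Fin (ℓ + 1) → α) : α × α →₀ ℕ :=
  (∑ i, Finsupp.single (i, i) 1) +
    (∑ m : Fin ℓ, Finsupp.single (f m.castSucc, f m.succ) 1) +
    ∑ w ∈ univ.filter (fun w => ∀ i, f i ≠ w), Finsupp.single (w, w) 1

lemma pathExponent_apply_eq_zero {e : α × α} (he : e.1 ≠ e.2)
    (hstep : ∀ m : Fin ℓ, (f m.castSucc, f m.succ) ≠ e) : pathExponent f e = 0 := by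
  have hdiag : ∀ w : α, (w, w) ≠ e := fun w hw => he (by rw [← hw])
  simp only [pathExponent, Finsupp.add_apply, sum_single_apply_eq_zero fun w _ => hdiag w,
    sum_single_apply_eq_zero fun m _ => hstep m]

lemma pathExponent_eq_termExponent_add :
    pathExponent f =
      termExponent (1 : Equiv.Perm α) univ +
        termExponent (pathRotation hf) (univ.erase (f 0)) := by
  rw [termExponent_pathRotation, pathExponent, add_assoc]
  rfl

end Path

lemma prod_ite_X_eq_ite_monomial {σ R ι : Type*} [CommSemiring R] (s : Finset ι) (p : ι → Prop)
    [DecidablePred p] (g : ι → σ) :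
    ∏ i ∈ s, (if p i then (X (g i) : MvPolynomial σ R) else 0) =
      if ∀ i ∈ s, p i then monomial (∑ i ∈ s, Finsupp.single (g i) 1) 1 else 0 := by
  rw [prod_ite_zero, monomial_sum_one]
  rfl

lemma exists_apply_ne_zero_of_mem_support_sum_X_mul {σ R ι : Type*} [CommSemiring R]
    {s : Finset ι} {g : ι → σ} {p : ι → MvPolynomial σ R} {m : σ →₀ ℕ}
    (hm : m ∈ (∑ i ∈ s, X (g i) * p i).support) : ∃ i ∈ s, m (g i) ≠ 0 := by
  classical
  rw [mem_support_iff, coeff_sum] at hm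
  obtain ⟨i, hi, hne⟩ := exists_ne_zero_of_sum_ne_zero hm
  refine ⟨i, hi, fun h => hne ?_⟩
  rw [coeff_X_mul', if_neg (Finsupp.notMem_support_iff.2 h)]

lemma ne_of_coeff_ne_zero_of_forall_mem_support {σ R : Type*} [CommSemiring R]
    {p q : MvPolynomial σ R} {d : σ →₀ ℕ} {P : σ → Prop} (hp : coeff d p ≠ 0)
    (hd : ∀ e, P e → d e = 0) (hq : ∀ m ∈ q.support, ∃ e, P e ∧ m e ≠ 0) : p ≠ q := by
  rintro rfl
  obtain ⟨e, he, hne⟩ := hq d (mem_support_iff.2 hp)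
  exact hne (hd e he)

section Determinant

variable {n : ℕ} {F : Type} [Field F] {E : Fin n → Fin n → Prop} [DecidableRel E]

lemma prod_symbAdj_perm (σ : Equiv.Perm (Fin n)) :
    ∏ i, symbAdj n F E (σ i) i =
      if ∀ i, E (σ i) i then monomial (termExponent σ univ) 1 else 0 := by
  simp only [symbAdj, Matrix.of_apply, prod_ite_X_eq_ite_monomial, mem_univ, true_implies,
    termExponent]

lemma prod_modMat_perm (t r : Fin n) (σ : Equiv.Perm (Fin n)) :
    ∏ i, modMat n F E t r (σ i) i =
      if σ r = t ∧ ∀ i ∈ univ.erase r, E (σ i) i then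
        monomial (termExponent σ (univ.erase r)) 1 else 0 := by
  rw [← mul_prod_erase _ _ (mem_univ r)]
  by_cases hσr : σ r = t
  · have hrow : ∀ i ∈ univ.erase r, modMat n F E t r (σ i) i = symbAdj n F E (σ i) i :=
      fun i hi => by
        have hir := ne_of_mem_erase hi
        simp [modMat, hir, hσr ▸ σ.injective.ne hir]
    rw [prod_congr rfl hrow]
    simp only [symbAdj, Matrix.of_apply, prod_ite_X_eq_ite_monomial, termExponent]
    simp [hσr, modMat]
  · simp [modMat, hσr]

lemma coeff_det_symbAdj_mul_det_modMat (hloop : ∀ w, E w w) {t r : Fin n}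
    (ρ : Equiv.Perm (Fin n)) (g : Fin n → ℕ) (hg : ∀ i ≠ r, ρ i ≠ i → g (ρ i) < g i)
    (hρr : ρ r = t) (hρE : ∀ i ∈ univ.erase r, E (ρ i) i) :
    coeff (termExponent (1 : Equiv.Perm (Fin n)) univ + termExponent ρ (univ.erase r))
      ((symbAdj n F E).det * (modMat n F E t r).det) = (Equiv.Perm.sign ρ : F) := by
  have hterm : ∀ σ σ' : Equiv.Perm (Fin n),
      coeff (termExponent (1 : Equiv.Perm (Fin n)) univ + termExponent ρ (univ.erase r))
        ((Equiv.Perm.sign σ • ∏ i, symbAdj n F E (σ i) i) *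
          (Equiv.Perm.sign σ' • ∏ i, modMat n F E t r (σ' i) i)) =
        if σ = 1 ∧ σ' = ρ then (Equiv.Perm.sign ρ : F) else 0 := by
    intro σ σ'
    rw [smul_mul_smul_comm, coeff_smul, prod_symbAdj_perm, prod_modMat_perm]
    by_cases hpair : σ = 1 ∧ σ' = ρ
    · obtain ⟨rfl, rfl⟩ := hpair
      rw [if_pos (show ∀ i, E ((1 : Equiv.Perm (Fin n)) i) i from hloop), if_pos ⟨hρr, hρE⟩,
        if_pos ⟨rfl, rfl⟩, monomial_mul, coeff_monomial, if_pos rfl]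
      simp [Units.smul_def]
    rw [if_neg hpair]
    split_ifs with hσ hσ'
    · rw [monomial_mul, coeff_monomial, if_neg fun h => hpair
        (eq_one_and_eq_of_termExponent_add_eq g hg (hσ'.1.trans hρr.symm) h), smul_zero]
    all_goals simp
  rw [Matrix.det_apply, Matrix.det_apply, sum_mul_sum, coeff_sum]
  simp only [coeff_sum, hterm, ite_and, sum_ite_irrel, sum_const_zero, sum_ite_eq', mem_univ,
    if_true]

lemma coeff_pathExponent_det_mul_det_ne_zero (hloop : ∀ w, E w w) {r t : Fin n} {ℓ : ℕ}
    {f : Fin (ℓ + 1) → Fin n} (hf : Function.Injective f) (hf0 : f 0 = r)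
    (hflast : f (Fin.last ℓ) = t) (hedge : ∀ m : Fin ℓ, E (f m.castSucc) (f m.succ)) :
    coeff (pathExponent f) ((symbAdj n F E).det * (modMat n F E t r).det) ≠ 0 := by
  have hρE : ∀ i ∈ univ.erase (f 0), E (pathRotation hf i) i := by
    intro i hi
    rcases em (∃ j, f j = i) with ⟨j, rfl⟩ | hoff
    swap
    · rw [pathRotation_apply_of_forall_ne hf (not_exists.1 hoff)]
      exact hloop i
    obtain ⟨m, rfl⟩ := Fin.eq_succ_of_ne_zero fun h => ne_of_mem_erase hi (h ▸ rfl)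
    rw [pathRotation_apply_succ]
    exact hedge m
  subst hf0 hflast
  rw [pathExponent_eq_termExponent_add hf, coeff_det_symbAdj_mul_det_modMat hloop
    (pathRotation hf) (fun v => (Function.invFun f v : Fin (ℓ + 1)))
    (fun i hi => invFun_pathRotation_lt hf hi)
    (pathRotation_apply_zero hf) hρE]
  rcases Int.units_eq_one_or (Equiv.Perm.sign (pathRotation hf)) with h | h <;> simp [h]

end Determinant

section StrongComponent

open Relation

variable {α : Type*} {E : α → α → Prop}

def IsStrongComponent (E : α → α → Prop) (S : Set α) : Prop :=
  S.Nonempty ∧ (∀ a ∈ S, ∀ b ∈ S, ReflTransGen E a b) ∧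
    ∀ a ∈ S, ∀ b, ReflTransGen E a b → ReflTransGen E b a → b ∈ S

lemma IsStrongComponent.mem_of_reflTransGen {S : Set α} (hS : IsStrongComponent E S)
    {a b y : α} (ha : a ∈ S) (hb : b ∈ S) (hay : ReflTransGen E a y)
    (hyb : ReflTransGen E y b) : y ∈ S :=
  hS.2.2 a ha y hay (hyb.trans (hS.2.1 b hb a ha))

lemma IsStrongComponent.eq_of_mem_of_mem {S S' : Set α} (hS : IsStrongComponent E S)
    (hS' : IsStrongComponent E S') {x : α} (hx : x ∈ S) (hx' : x ∈ S') : S = S' := by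
  ext b
  constructor
  · intro hb
    exact hS'.mem_of_reflTransGen hx' hx' (hS.2.1 x hx b hb) (hS.2.1 b hb x hx)
  · intro hb
    exact hS.mem_of_reflTransGen hx hx (hS'.2.1 x hx' b hb) (hS'.2.1 b hb x hx')

lemma reflTransGen_of_chain {ℓ : ℕ} {f : Fin (ℓ + 1) → α}
    (hedge : ∀ m : Fin ℓ, E (f m.castSucc) (f m.succ)) {i j : Fin (ℓ + 1)} (hij : i ≤ j) :
    ReflTransGen E (f i) (f j) := by
  refine (reflTransGen_of_succ_of_le (fun a b => E (f a) (f b)) (fun k hk => ?_) hij).lift f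
    fun _ _ h => h
  obtain ⟨m, rfl⟩ := Fin.eq_castSucc_of_ne_last (hk.2.trans_le (Fin.le_last j)).ne
  rw [Fin.orderSucc_castSucc]
  exact hedge m

lemma IsStrongComponent.not_step_of_chain_visits_outside {S S' : Set α}
    (hS : IsStrongComponent E S) (hS' : IsStrongComponent E S') {ℓ : ℕ}
    {f : Fin (ℓ + 1) → α} (hedge : ∀ m : Fin ℓ, E (f m.castSucc) (f m.succ))
    (h0 : f 0 ∈ S) (hlast : f (Fin.last ℓ) ∈ S') {j : Fin (ℓ + 1)} (hjS : f j ∉ S)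
    (hjS' : f j ∉ S') (m : Fin ℓ) : ¬(f m.castSucc ∈ S ∧ f m.succ ∈ S') := by
  rintro ⟨hmS, hmS'⟩
  rcases le_or_gt j m.castSucc with hle | hlt
  · exact hjS (hS.mem_of_reflTransGen h0 hmS (reflTransGen_of_chain hedge (Fin.zero_le j))
      (reflTransGen_of_chain hedge hle))
  · exact hjS' (hS'.mem_of_reflTransGen hmS' hlast
      (reflTransGen_of_chain hedge (Fin.castSucc_lt_iff_succ_le.1 hlt))
      (reflTransGen_of_chain hedge (Fin.le_last j)))

end StrongComponent

/-- Let `R, T` be distinct SCCs of `G`, `r ∈ R`, `t ∈ T`, and let `F` be the set of all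
edges from `R` to `T`. If `P` is a simple `r → t` path through a vertex `y ∉ R ∪ T`,
then: `P` uses no edge of `F`; the polynomial `det(Ã(G)) · det(Ã^{t,r}(G))` contains
the monomial `(∏_{i∈V} x_{i,i}) · μ(P) · (∏_{i∉V(P)} x_{i,i})`, whose exponent vector
uses no variable `x_{u,v}` with `uv ∈ F`; every monomial of
`−∑_{uv∈F} x_{u,v} det(Ã^{u,r}(G)) det(Ã^{t,v}(G))` contains some variable `x_{u,v}`
with `uv ∈ F`; hence the two polynomials differ. -/
theorem lhs_ne_rhs_of_path_through_outside (n : ℕ) (F : Type) [Field F]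
    (E : Fin n → Fin n → Prop) [DecidableRel E] (hloop : ∀ w, E w w)
    (R T : Finset (Fin n))
    (hR : (R : Set (Fin n)).Nonempty ∧
      (∀ a ∈ R, ∀ b ∈ R, Relation.ReflTransGen E a b) ∧
      ∀ a ∈ R, ∀ b, Relation.ReflTransGen E a b → Relation.ReflTransGen E b a → b ∈ R)
    (hT : (T : Set (Fin n)).Nonempty ∧
      (∀ a ∈ T, ∀ b ∈ T, Relation.ReflTransGen E a b) ∧
      ∀ a ∈ T, ∀ b, Relation.ReflTransGen E a b → Relation.ReflTransGen E b a → b ∈ T)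
    (hRT : R ≠ T)
    (r t : Fin n) (hr : r ∈ R) (ht : t ∈ T)
    (P : SPath n E r t)
    (y : Fin n) (hyP : ∃ j, P.2.1 j = y) (hyR : y ∉ R) (hyT : y ∉ T) :
    -- the exponent vector of the monomial (∏_{i∈V} x_{i,i}) · μ(P) · (∏_{i∉V(P)} x_{i,i})
    letI d : (Fin n × Fin n) →₀ ℕ :=
      (∑ i : Fin n, Finsupp.single (i, i) 1) +
      (∑ m : Fin ((P.1 : ℕ)), Finsupp.single (P.2.1 m.castSucc, P.2.1 m.succ) 1) +
      ∑ w ∈ Finset.univ.filter (fun w => ∀ i, P.2.1 i ≠ w), Finsupp.single (w, w) 1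
    letI RHS : MvPolynomial (Fin n × Fin n) F :=
      -∑ e : {e : Fin n × Fin n // E e.1 e.2 ∧ e.1 ∈ R ∧ e.2 ∈ T},
        X e.1 * (modMat n F E e.1.1 r).det * (modMat n F E t e.1.2).det
    (∀ m : Fin ((P.1 : ℕ)), ¬(P.2.1 m.castSucc ∈ R ∧ P.2.1 m.succ ∈ T)) ∧
    MvPolynomial.coeff d ((symbAdj n F E).det * (modMat n F E t r).det) ≠ 0 ∧
    (∀ e : Fin n × Fin n, E e.1 e.2 → e.1 ∈ R → e.2 ∈ T → d e = 0) ∧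
    (∀ m ∈ RHS.support, ∃ e : Fin n × Fin n, (E e.1 e.2 ∧ e.1 ∈ R ∧ e.2 ∈ T) ∧ m e ≠ 0) ∧
    (symbAdj n F E).det * (modMat n F E t r).det ≠ RHS := by
  obtain ⟨ℓ, f, hf, hf0, hflast, hedge⟩ := P
  obtain ⟨j, rfl⟩ := hyP
  have hR' : IsStrongComponent E (R : Set (Fin n)) := hR
  have hT' : IsStrongComponent E (T : Set (Fin n)) := hT
  have hnot : ∀ m : Fin ℓ, ¬(f m.castSucc ∈ R ∧ f m.succ ∈ T) :=
    hR'.not_step_of_chain_visits_outside hT' hedge (hf0 ▸ hr) (hflast ▸ ht) hyR hyT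
  have hcoeff := coeff_pathExponent_det_mul_det_ne_zero (F := F) hloop hf hf0 hflast hedge
  have hd : ∀ e : Fin n × Fin n, E e.1 e.2 → e.1 ∈ R → e.2 ∈ T → pathExponent f e = 0 := by
    intro e _ h1 h2
    refine pathExponent_apply_eq_zero (fun h => hRT ?_) fun m hm => hnot m ?_
    · exact_mod_cast hR'.eq_of_mem_of_mem hT' h1 (h ▸ h2)
    · subst hm
      exact ⟨h1, h2⟩
  refine ⟨hnot, hcoeff, hd, ?hsupp, ne_of_coeff_ne_zero_of_forall_mem_support hcoeff
    (fun e he => hd e he.1 he.2.1 he.2.2) ?hsupp⟩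
  intro m hm
  rw [support_neg] at hm
  simp only [mul_assoc] at hm
  obtain ⟨e, -, he⟩ := exists_apply_ne_zero_of_mem_support_sum_X_mul hm
  exact ⟨e.1, e.2, he⟩
end

section
/- Let δ_1, ..., δ_ℓ ∈ [0, δ] with Σ_{i=1}^{ℓ} n^{δ_i} ≤ n (each n^{δ_i} ≤ n^δ), and suppose the function q ↦ n^{ω(q,a,q)} satisfies superadditivity in the sense that n^{ω(q_1,a,q_1)} + n^{ω(q_2,a,q_2)} ≤ n^{ω(q,a,q)} whenever n^{q} = n^{q_1} + n^{q_2}. Then Σ_{i=1}^{ℓ} n^{ω(δ_i, a, δ_i)} ≤ 3 · n^{1-δ} · n^{ω(δ, a, δ)}. -/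
/-!
Work with the sizes `n ^ δᵢ` rather than the exponents. While two sizes add up to at most `n ^ δ`,
replace them by one piece of their combined size: by superadditivity the sum of the
`n ^ ω(δᵢ, a, δᵢ)` does not decrease, and the total size is unchanged. When no merge is possible,
at most one piece has size `≤ n ^ δ / 2`, so there are at most `2 n ^ (1 - δ) + 1 ≤ 3 n ^ (1 - δ)`
pieces, each contributing at most `n ^ ω(δ, a, δ)` by monotonicity of `ω`.
-/

open Real

namespace Multiset

variable {α : Type*} (size : α → ℝ) {D : ℝ}

theorem exists_eq_cons_cons_of_one_lt_card {S : Multiset α} (h : 1 < card S) :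
    ∃ x y T, S = x ::ₘ y ::ₘ T := by
  obtain ⟨x, hx⟩ := card_pos_iff_exists_mem.1 (zero_lt_one.trans h)
  obtain ⟨R, rfl⟩ := exists_cons_of_mem hx
  obtain ⟨y, hy⟩ := card_pos_iff_exists_mem.1 (by simpa using h : 0 < card R)
  obtain ⟨T, rfl⟩ := exists_cons_of_mem hy
  exact ⟨x, y, T, rfl⟩

-- At most one member has size `≤ D / 2`; each of the others accounts for more than `D / 2` of the sum.
theorem card_le_of_forall_lt_add (hD : 0 < D) (hsize : ∀ x, 0 ≤ size x) {S : Multiset α}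
    (hS : ∀ x y T, S = x ::ₘ y ::ₘ T → D < size x + size y) :
    (card S : ℝ) ≤ 2 * (S.map size).sum / D + 1 := by
  set small := S.filter (fun x => size x ≤ D / 2)
  set big := S.filter (fun x => ¬ size x ≤ D / 2)
  have hsplit : small + big = S := filter_add_not _ S
  have hsmall : card small ≤ 1 := by
    by_contra! h
    obtain ⟨x, y, T, hxyT⟩ := exists_eq_cons_cons_of_one_lt_card h
    have hx : x ∈ small := hxyT ▸ mem_cons_self x _
    have hy : y ∈ small := hxyT ▸ mem_cons_of_mem (mem_cons_self y T)
    rw [mem_filter] at hx hy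
    have := hS x y (T + big) (by rw [← hsplit, hxyT]; simp)
    linarith
  have hbig : (card big : ℝ) * (D / 2) ≤ (S.map size).sum :=
    calc (card big : ℝ) * (D / 2) = card (big.map size) • (D / 2) := by simp
      _ ≤ (big.map size).sum :=
          card_nsmul_le_sum fun _ hsx ↦ by
            obtain ⟨x, hx, rfl⟩ := mem_map.1 hsx
            exact (not_le.1 (mem_filter.1 hx).2).le
      _ ≤ (S.map size).sum := by
          rw [← hsplit, map_add, sum_add, le_add_iff_nonneg_left]
          exact sum_nonneg fun _ hsx ↦ by obtain ⟨x, -, rfl⟩ := mem_map.1 hsx; exact hsize x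
  have hcard : (card S : ℝ) = card small + card big := by
    rw [← hsplit, card_add, Nat.cast_add]
  rw [hcard, add_comm, div_add_one hD.ne', le_div_iff₀ hD]
  have : (card small : ℝ) ≤ 1 := by exact_mod_cast hsmall
  nlinarith

theorem sum_map_le_of_merge (f : α → ℝ) {M : ℝ} (hD : 0 < D) (hM : 0 ≤ M)
    (hsize : ∀ x, 0 ≤ size x) (hfM : ∀ x, size x ≤ D → f x ≤ M)
    (hmerge : ∀ x y, size x + size y ≤ D → ∃ z, size z = size x + size y ∧ f x + f y ≤ f z)
    (S : Multiset α) (hS : ∀ x ∈ S, size x ≤ D) :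
    (S.map f).sum ≤ (2 * (S.map size).sum / D + 1) * M := by
  induction hk : card S using Nat.strong_induction_on generalizing S with
  | _ k ih =>
  by_cases hpair : ∃ x y T, S = x ::ₘ y ::ₘ T ∧ size x + size y ≤ D
  · obtain ⟨x, y, T, rfl, hxy⟩ := hpair
    obtain ⟨z, hz, hfz⟩ := hmerge x y hxy
    have hmerged := ih (card (z ::ₘ T)) (by simp [← hk]) (z ::ₘ T)
      (by simpa [hz, hxy] using fun t ht ↦ hS t (by simp [ht])) rfl
    simp only [map_cons, sum_cons, hz, ← add_assoc] at hmerged ⊢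
    linarith
  · push Not at hpair
    calc (S.map f).sum ≤ card (S.map f) • M :=
          sum_le_card_nsmul _ _ fun _ hfx ↦ by
            obtain ⟨x, hx, rfl⟩ := mem_map.1 hfx
            exact hfM x (hS x hx)
      _ = card S * M := by simp
      _ ≤ _ := mul_le_mul_of_nonneg_right (card_le_of_forall_lt_add size hD hsize hpair) hM

end Multiset

theorem Monotone.rpow_le_rpow_of_rpow_le {g : ℝ → ℝ} (hg : Monotone g) {n x y : ℝ}
    (hn : 1 ≤ n) (h : n ^ x ≤ n ^ y) : n ^ g x ≤ n ^ g y := by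
  obtain rfl | hn := hn.eq_or_lt
  · simp
  · exact rpow_le_rpow_of_exponent_le hn.le (hg ((rpow_le_rpow_left_iff hn).1 h))

theorem merging_bound_general (n : ℝ) (hn : 1 ≤ n) (a δ : ℝ)
    (hδ : δ ∈ Set.Icc (0 : ℝ) 1)
    (ω : ℝ → ℝ → ℝ → ℝ)
    (hmono : ∀ x y z x' y' z', x ≤ x' → y ≤ y' → z ≤ z' → ω x y z ≤ ω x' y' z')
    (hsuper : ∀ q₁ q₂ q : ℝ, n ^ q = n ^ q₁ + n ^ q₂ →
      n ^ ω q₁ a q₁ + n ^ ω q₂ a q₂ ≤ n ^ ω q a q)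
    (ℓ : ℕ) (δi : Fin ℓ → ℝ)
    (hδi : ∀ i, δi i ∈ Set.Icc (0 : ℝ) δ)
    (hsum : ∑ i, n ^ δi i ≤ n) :
    ∑ i, n ^ ω (δi i) a (δi i) ≤ 3 * n ^ (1 - δ) * n ^ ω δ a δ := by
  have hn0 : 0 < n := zero_lt_one.trans_le hn
  have hdiag : Monotone fun q ↦ ω q a q := fun _ _ h ↦ hmono _ _ _ _ _ _ h le_rfl h
  have hmerge (x y : ℝ) (hxy : n ^ x + n ^ y ≤ n ^ δ) :
      ∃ z, n ^ z = n ^ x + n ^ y ∧ n ^ ω x a x + n ^ ω y a y ≤ n ^ ω z a z := by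
    obtain rfl | hn1 := hn.eq_or_lt
    · norm_num at hxy
    have hz := rpow_logb hn0 hn1.ne' (by positivity : 0 < n ^ x + n ^ y)
    exact ⟨_, hz, hsuper x y _ hz⟩
  have key := Multiset.sum_map_le_of_merge (fun x ↦ n ^ x) (fun q ↦ n ^ ω q a q)
    (rpow_pos_of_pos hn0 δ) (rpow_nonneg hn0.le _) (fun x ↦ rpow_nonneg hn0.le x)
    (fun x ↦ hdiag.rpow_le_rpow_of_rpow_le hn) hmerge (Finset.univ.val.map δi)
    (by simpa using fun i ↦ rpow_le_rpow_of_exponent_le hn (hδi i).2)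
  simp only [Multiset.map_map, Function.comp_def, ← Finset.sum_eq_multiset_sum] at key
  have hcount : 2 * (∑ i, n ^ δi i) / n ^ δ + 1 ≤ 3 * n ^ (1 - δ) := by
    have h1 : 1 ≤ n ^ (1 - δ) := one_le_rpow hn (by linarith [hδ.2])
    have h2 : 2 * (∑ i, n ^ δi i) / n ^ δ ≤ 2 * n ^ (1 - δ) := by
      rw [rpow_sub hn0, rpow_one, mul_div_assoc]
      gcongr
    linarith
  exact key.trans (mul_le_mul_of_nonneg_right hcount (rpow_nonneg hn0.le _))

/-- The merging argument: if `δ_1, …, δ_ℓ ∈ [0, δ]` with `∑ n^{δ_i} ≤ n`, the map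
`q ↦ n^{ω(q,a,q)}` is superadditive in the sense that merging two sizes never
decreases it, and `ω` is monotone in each argument, then
`∑_i n^{ω(δ_i,a,δ_i)} ≤ 3 · n^{1−δ} · n^{ω(δ,a,δ)}`. -/
theorem merging_bound (n : ℝ) (hn : 1 ≤ n) (a δ : ℝ)
    (ha : a ∈ Set.Icc (0 : ℝ) 1) (hδ : δ ∈ Set.Icc (0 : ℝ) 1)
    (ω : ℝ → ℝ → ℝ → ℝ)
    (hmono : ∀ x y z x' y' z', x ≤ x' → y ≤ y' → z ≤ z' → ω x y z ≤ ω x' y' z')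
    (hsuper : ∀ q₁ q₂ q : ℝ, n ^ q = n ^ q₁ + n ^ q₂ →
      n ^ ω q₁ a q₁ + n ^ ω q₂ a q₂ ≤ n ^ ω q a q)
    (ℓ : ℕ) (δi : Fin ℓ → ℝ)
    (hδi : ∀ i, δi i ∈ Set.Icc (0 : ℝ) δ)
    (hsum : ∑ i, n ^ δi i ≤ n) :
    ∑ i, n ^ ω (δi i) a (δi i) ≤ 3 * n ^ (1 - δ) * n ^ ω δ a δ :=
  merging_bound_general n hn a δ hδ ω hmono hsuper ℓ δi hδi hsum
end

section
/- The set of cycle covers of G containing the edge vu (for fixed v, u) is in bijection with pairs (P, 𝒞') where P is a simple u→v path in G and 𝒞' is a cycle cover of the induced subgraph G[V \ V(P)]. The bijection sends a cycle cover 𝒞 containing a cycle C through edge vu to (P_C, 𝒞 \ {C}), where P_C is the u→v path obtained from C by removing edge vu. Moreover, under this bijection, μ(C)/x_{v,u} = μ(P_C). -/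
open MvPolynomial

namespace CCAux

open Equiv Equiv.Perm

variable {n : ℕ}

theorem exists_pow_eq (u v : Fin n) (σ : Perm (Fin n)) (h : σ v = u) :
    ∃ k, (σ ^ k) u = v := by
  refine ⟨orderOf σ - 1, σ.injective ?_⟩
  have hm : 0 < orderOf σ := orderOf_pos σ
  have : σ ^ (orderOf σ - 1 + 1) = 1 := by
    rw [Nat.sub_add_cancel hm, pow_orderOf_eq_one]
  calc σ ((σ ^ (orderOf σ - 1)) u) = (σ ^ (orderOf σ - 1 + 1)) u := by
        rw [pow_succ', Perm.mul_apply]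
    _ = u := by rw [this]; rfl
    _ = σ v := h.symm

noncomputable def len (u v : Fin n) (σ : Perm (Fin n)) (h : σ v = u) : ℕ :=
  Nat.find (exists_pow_eq u v σ h)

theorem pow_len (u v : Fin n) (σ : Perm (Fin n)) (h : σ v = u) :
    (σ ^ len u v σ h) u = v := Nat.find_spec (exists_pow_eq u v σ h)

theorem len_min (u v : Fin n) (σ : Perm (Fin n)) (h : σ v = u) {k : ℕ}
    (hk : k < len u v σ h) : (σ ^ k) u ≠ v := Nat.find_min (exists_pow_eq u v σ h) hk

theorem pow_inj (u v : Fin n) (σ : Perm (Fin n)) (h : σ v = u) {i j : ℕ}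
    (hi : i ≤ len u v σ h) (hj : j ≤ len u v σ h) (hij : (σ ^ i) u = (σ ^ j) u) :
    i = j := by
  -- wlog i ≤ j
  rcases le_total i j with hle | hle
  case _ =>
    by_contra hne
    have hd : 0 < j - i := Nat.sub_pos_of_lt (lt_of_le_of_ne hle hne)
    have h1 : (σ ^ (j - i)) u = u := by
      have : (σ ^ i) ((σ ^ (j - i)) u) = (σ ^ i) u := by
        rw [← Perm.mul_apply, ← pow_add, Nat.add_sub_cancel' hle, hij]
      exact (σ ^ i).injective this
    have h2 : (σ ^ (len u v σ h - (j - i))) u = v := by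
      have : (σ ^ (len u v σ h - (j - i))) ((σ ^ (j - i)) u) = (σ ^ len u v σ h) u := by
        rw [← Perm.mul_apply, ← pow_add, Nat.sub_add_cancel (le_trans (Nat.sub_le _ _) hj)]
      rw [h1] at this
      rw [this, pow_len]
    exact len_min u v σ h (Nat.sub_lt (lt_of_lt_of_le hd ((Nat.sub_le j i).trans hj)) hd) h2
  case _ =>
    by_contra hne
    have hd : 0 < i - j := Nat.sub_pos_of_lt (lt_of_le_of_ne hle (Ne.symm hne))
    have h1 : (σ ^ (i - j)) u = u := by
      have : (σ ^ j) ((σ ^ (i - j)) u) = (σ ^ j) u := by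
        rw [← Perm.mul_apply, ← pow_add, Nat.add_sub_cancel' hle, ← hij]
      exact (σ ^ j).injective this
    have h2 : (σ ^ (len u v σ h - (i - j))) u = v := by
      have : (σ ^ (len u v σ h - (i - j))) ((σ ^ (i - j)) u) = (σ ^ len u v σ h) u := by
        rw [← Perm.mul_apply, ← pow_add, Nat.sub_add_cancel (le_trans (Nat.sub_le _ _) hi)]
      rw [h1] at this
      rw [this, pow_len]
    exact len_min u v σ h (Nat.sub_lt (lt_of_lt_of_le hd ((Nat.sub_le i j).trans hi)) hd) h2


theorem len_lt (u v : Fin n) (σ : Perm (Fin n)) (h : σ v = u) : len u v σ h < n := by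
  have hinj : Function.Injective (fun j : Fin (len u v σ h + 1) => (σ ^ (j : ℕ)) u) := by
    intro i j hij
    exact Fin.ext (pow_inj u v σ h (Nat.lt_succ_iff.mp i.isLt) (Nat.lt_succ_iff.mp j.isLt) hij)
  have := Fintype.card_le_of_injective _ hinj
  simpa using this

noncomputable def lenF (u v : Fin n) (σ : Perm (Fin n)) (h : σ v = u) : Fin n :=
  ⟨len u v σ h, len_lt u v σ h⟩

def pathFun (u : Fin n) (σ : Perm (Fin n)) (m : ℕ) : Fin (m + 1) → Fin n :=
  fun j => (σ ^ (j : ℕ)) u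

theorem pathFun_inj (u v : Fin n) (σ : Perm (Fin n)) (h : σ v = u) :
    Function.Injective (pathFun u σ (len u v σ h)) := by
  intro i j hij
  exact Fin.ext (pow_inj u v σ h (Nat.lt_succ_iff.mp i.isLt) (Nat.lt_succ_iff.mp j.isLt) hij)

theorem pathFun_zero (u : Fin n) (σ : Perm (Fin n)) (m : ℕ) :
    pathFun u σ m 0 = u := by simp [pathFun]

theorem pathFun_last (u v : Fin n) (σ : Perm (Fin n)) (h : σ v = u) :
    pathFun u σ (len u v σ h) (Fin.last _) = v := pow_len u v σ h

theorem pathFun_succ (u : Fin n) (σ : Perm (Fin n)) (m : ℕ) (i : Fin m) :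
    pathFun u σ m i.succ = σ (pathFun u σ m i.castSucc) := by
  simp only [pathFun, Fin.val_succ, Fin.coe_castSucc, pow_succ', Perm.mul_apply]

/-- membership in the path is preserved by σ -/
theorem mem_iff (u v : Fin n) (σ : Perm (Fin n)) (h : σ v = u) (w : Fin n) :
    (∃ j, pathFun u σ (len u v σ h) j = w) ↔
      (∃ j, pathFun u σ (len u v σ h) j = σ w) := by
  set m := len u v σ h with hm
  constructor
  · rintro ⟨j, rfl⟩
    rcases eq_or_ne j (Fin.last m) with rfl | hj
    · exact ⟨0, by rw [pathFun_last u v σ h, h, pathFun_zero]⟩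
    · obtain ⟨i, rfl⟩ := Fin.exists_castSucc_eq.mpr hj
      exact ⟨i.succ, (pathFun_succ u σ m i).symm ▸ rfl⟩
  · rintro ⟨j, hj⟩
    rcases eq_or_ne j 0 with rfl | hj0
    · rw [pathFun_zero] at hj
      have : w = v := σ.injective (hj.symm ▸ h.symm)
      exact ⟨Fin.last m, by rw [pathFun_last u v σ h, this]⟩
    · obtain ⟨i, rfl⟩ := Fin.exists_succ_eq.mpr hj0
      rw [pathFun_succ] at hj
      exact ⟨i.castSucc, σ.injective hj⟩

theorem not_mem_iff (u v : Fin n) (σ : Perm (Fin n)) (h : σ v = u) (w : Fin n) :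
    (∀ j, pathFun u σ (len u v σ h) j ≠ σ w) ↔
      (∀ j, pathFun u σ (len u v σ h) j ≠ w) := by
  rw [← not_exists, ← not_exists]
  exact not_congr (mem_iff u v σ h w).symm


section WithE
variable {E : Fin n → Fin n → Prop} [DecidableRel E]

instance rangeDec {m : ℕ} (f : Fin m → Fin n) : DecidablePred (· ∈ Set.range f) :=
  fun w => decidable_of_iff (∃ i, f i = w) Set.mem_range.symm

/-- the forward map -/
noncomputable def fwd (u v : Fin n) (σ : {σ : Perm (Fin n) // (∀ w, E w (σ w)) ∧ σ v = u}) :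
    Σ P : SPath n E u v,
      {τ : Perm {w : Fin n // ∀ i, P.2.1 i ≠ w} // ∀ a, E a.1 ((τ a) : Fin n)} :=
  ⟨⟨lenF u v σ.1 σ.2.2, pathFun u σ.1 (len u v σ.1 σ.2.2),
    pathFun_inj u v σ.1 σ.2.2, pathFun_zero u σ.1 _, pathFun_last u v σ.1 σ.2.2,
    fun i => (congrArg (E (pathFun u σ.1 (len u v σ.1 σ.2.2) i.castSucc))
      (pathFun_succ u σ.1 (len u v σ.1 σ.2.2) i)).mpr (σ.2.1 _)⟩,
   σ.1.subtypePerm (not_mem_iff u v σ.1 σ.2.2),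
   fun a => σ.2.1 a.1⟩

/-- the backward permutation -/
noncomputable def bwdPerm {m : ℕ} (f : Fin (m + 1) → Fin n) (hf : Function.Injective f)
    (τ : Perm {w : Fin n // ∀ i, f i ≠ w}) : Perm (Fin n) :=
  ((finRotate (m + 1)).extendDomain (Equiv.ofInjective f hf)) * Equiv.Perm.ofSubtype τ

theorem bwdPerm_apply_mem {m : ℕ} (f : Fin (m + 1) → Fin n) (hf : Function.Injective f)
    (τ : Perm {w : Fin n // ∀ i, f i ≠ w}) (j : Fin (m + 1)) :
    bwdPerm f hf τ (f j) = f (finRotate (m + 1) j) := by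
  have h1 : ¬ (∀ i, f i ≠ f j) := fun h => h j rfl
  have h2 : Equiv.Perm.ofSubtype τ (f j) = f j :=
    Equiv.Perm.ofSubtype_apply_of_not_mem τ h1
  have h3 : f j = ((Equiv.ofInjective f hf) j : Fin n) := rfl
  rw [bwdPerm, Perm.mul_apply, h2, h3, Perm.extendDomain_apply_image]
  rfl

theorem bwdPerm_apply_not_mem {m : ℕ} (f : Fin (m + 1) → Fin n) (hf : Function.Injective f)
    (τ : Perm {w : Fin n // ∀ i, f i ≠ w}) (w : Fin n) (hw : ∀ i, f i ≠ w) :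
    bwdPerm f hf τ w = (τ ⟨w, hw⟩ : Fin n) := by
  have h2 : Equiv.Perm.ofSubtype τ w = (τ ⟨w, hw⟩ : Fin n) :=
    Equiv.Perm.ofSubtype_apply_of_mem τ hw
  have h3 : ¬ ((τ ⟨w, hw⟩ : Fin n) ∈ Set.range f) := by
    rintro ⟨i, hi⟩
    exact (τ ⟨w, hw⟩).2 i hi
  rw [bwdPerm, Perm.mul_apply, h2, Perm.extendDomain_apply_not_subtype _ _ h3]

theorem bwdPerm_pow {m : ℕ} (f : Fin (m + 1) → Fin n) (hf : Function.Injective f)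
    (hf0 : f 0 = u') (τ : Perm {w : Fin n // ∀ i, f i ≠ w}) (k : ℕ) (hk : k < m + 1) :
    ((bwdPerm f hf τ) ^ k) u' = f ⟨k, hk⟩ := by
  induction k with
  | zero => simpa using hf0.symm
  | succ k ih =>
    have hk' : k < m + 1 := Nat.lt_of_succ_lt hk
    have hkm : k < m := Nat.lt_of_succ_lt_succ hk
    have : (⟨k, hk'⟩ : Fin (m + 1)) = (⟨k, hkm⟩ : Fin m).castSucc := rfl
    rw [pow_succ', Perm.mul_apply, ih hk', bwdPerm_apply_mem, this, finRotate_succ_apply,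
      Fin.coeSucc_eq_succ]
    rfl


theorem bwdPerm_apply_castSucc {m : ℕ} (f : Fin (m + 1) → Fin n) (hf : Function.Injective f)
    (τ : Perm {w : Fin n // ∀ i, f i ≠ w}) (i : Fin m) :
    bwdPerm f hf τ (f i.castSucc) = f i.succ := by
  rw [bwdPerm_apply_mem, finRotate_succ_apply, Fin.coeSucc_eq_succ]

theorem bwdPerm_apply_last {m : ℕ} (f : Fin (m + 1) → Fin n) (hf : Function.Injective f)
    (τ : Perm {w : Fin n // ∀ i, f i ≠ w}) :
    bwdPerm f hf τ (f (Fin.last m)) = f 0 := by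
  rw [bwdPerm_apply_mem, finRotate_last]

theorem bwdPerm_edges {m : ℕ} (f : Fin (m + 1) → Fin n) (hf : Function.Injective f)
    {u v : Fin n} (hvu : E v u) (hf0 : f 0 = u) (hfl : f (Fin.last m) = v)
    (hE : ∀ i : Fin m, E (f i.castSucc) (f i.succ))
    (τ : Perm {w : Fin n // ∀ i, f i ≠ w}) (hτ : ∀ a, E a.1 ((τ a) : Fin n))
    (w : Fin n) : E w (bwdPerm f hf τ w) := by
  by_cases hw : ∀ i, f i ≠ w
  · rw [bwdPerm_apply_not_mem f hf τ w hw]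
    exact hτ ⟨w, hw⟩
  · push_neg at hw
    obtain ⟨j, rfl⟩ := hw
    rcases eq_or_ne j (Fin.last m) with rfl | hj
    · rw [bwdPerm_apply_last, hf0, hfl]
      exact hvu
    · obtain ⟨i, rfl⟩ := Fin.exists_castSucc_eq.mpr hj
      rw [bwdPerm_apply_castSucc]
      exact hE i

theorem bwdPerm_v {m : ℕ} (f : Fin (m + 1) → Fin n) (hf : Function.Injective f)
    {u v : Fin n} (hf0 : f 0 = u) (hfl : f (Fin.last m) = v)
    (τ : Perm {w : Fin n // ∀ i, f i ≠ w}) : bwdPerm f hf τ v = u := by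
  rw [← hfl, bwdPerm_apply_last, hf0]

theorem len_bwdPerm {m : ℕ} (f : Fin (m + 1) → Fin n) (hf : Function.Injective f)
    {u v : Fin n} (hf0 : f 0 = u) (hfl : f (Fin.last m) = v)
    (τ : Perm {w : Fin n // ∀ i, f i ≠ w}) :
    len u v (bwdPerm f hf τ) (bwdPerm_v f hf hf0 hfl τ) = m := by
  rw [len, Nat.find_eq_iff]
  constructor
  · rw [bwdPerm_pow f hf hf0 τ m (Nat.lt_succ_self m)]
    exact hfl
  · intro k hk hkv
    rw [bwdPerm_pow f hf hf0 τ k (Nat.lt_succ_of_lt hk), ← hfl] at hkv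
    have : k = m := by
      have := congrArg Fin.val (hf hkv)
      simpa using this
    omega

/-- the backward map -/
noncomputable def bwd (u v : Fin n) (hvu : E v u)
    (x : Σ P : SPath n E u v,
      {τ : Perm {w : Fin n // ∀ i, P.2.1 i ≠ w} // ∀ a, E a.1 ((τ a) : Fin n)}) :
    {σ : Perm (Fin n) // (∀ w, E w (σ w)) ∧ σ v = u} :=
  ⟨bwdPerm x.1.2.1 x.1.2.2.1 x.2.1,
   fun w => bwdPerm_edges x.1.2.1 x.1.2.2.1 hvu x.1.2.2.2.1 x.1.2.2.2.2.1 x.1.2.2.2.2.2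
     x.2.1 x.2.2 w,
   bwdPerm_v x.1.2.1 x.1.2.2.1 x.1.2.2.2.1 x.1.2.2.2.2.1 x.2.1⟩

/-- extensionality for the sigma type -/
theorem sigma_eq {u v : Fin n}
    (x y : Σ P : SPath n E u v,
      {τ : Perm {w : Fin n // ∀ i, P.2.1 i ≠ w} // ∀ a, E a.1 ((τ a) : Fin n)})
    (h1 : (x.1.1 : ℕ) = (y.1.1 : ℕ))
    (h2 : ∀ (j : ℕ) (hj1 : j < (x.1.1 : ℕ) + 1) (hj2 : j < (y.1.1 : ℕ) + 1),
      x.1.2.1 ⟨j, hj1⟩ = y.1.2.1 ⟨j, hj2⟩)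
    (h3 : ∀ (w : Fin n) (hx : ∀ i, x.1.2.1 i ≠ w) (hy : ∀ i, y.1.2.1 i ≠ w),
      (x.2.1 ⟨w, hx⟩ : Fin n) = (y.2.1 ⟨w, hy⟩ : Fin n)) : x = y := by
  obtain ⟨⟨⟨l1, hl1⟩, f1, hf1⟩, t1, ht1⟩ := x
  obtain ⟨⟨⟨l2, hl2⟩, f2, hf2⟩, t2, ht2⟩ := y
  simp only at h1 h2 h3
  subst h1
  have hff : f1 = f2 := by
    funext j
    obtain ⟨j, hj⟩ := j
    exact h2 j hj hj
  subst hff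
  have htt : t1 = t2 := by
    apply Equiv.ext
    rintro ⟨w, hw⟩
    exact Subtype.ext (h3 w hw hw)
  subst htt
  rfl


theorem bwd_fwd (u v : Fin n) (hvu : E v u)
    (σ : {σ : Perm (Fin n) // (∀ w, E w (σ w)) ∧ σ v = u}) :
    bwd u v hvu (fwd u v σ) = σ := by
  apply Subtype.ext
  apply Equiv.ext
  intro w
  show bwdPerm (pathFun u σ.1 (len u v σ.1 σ.2.2)) (pathFun_inj u v σ.1 σ.2.2)
    (σ.1.subtypePerm (not_mem_iff u v σ.1 σ.2.2)) w = σ.1 w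
  by_cases hw : ∀ i, pathFun u σ.1 (len u v σ.1 σ.2.2) i ≠ w
  · rw [bwdPerm_apply_not_mem _ _ _ w hw]
    rfl
  · push_neg at hw
    obtain ⟨j, rfl⟩ := hw
    rcases eq_or_ne j (Fin.last _) with rfl | hj
    · rw [bwdPerm_apply_last]
      conv_rhs => rw [pathFun_last u v σ.1 σ.2.2, σ.2.2]
      rw [pathFun_zero]
    · obtain ⟨i, rfl⟩ := Fin.exists_castSucc_eq.mpr hj
      rw [bwdPerm_apply_castSucc, pathFun_succ]

theorem fwd_bwd (u v : Fin n) (hvu : E v u)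
    (x : Σ P : SPath n E u v,
      {τ : Perm {w : Fin n // ∀ i, P.2.1 i ≠ w} // ∀ a, E a.1 ((τ a) : Fin n)}) :
    fwd u v (bwd u v hvu x) = x := by
  obtain ⟨⟨⟨m, hm⟩, f, hf, hf0, hfl, hE⟩, τ, hτ⟩ := x
  apply sigma_eq
  · exact len_bwdPerm f hf hf0 hfl τ
  · intro j hj1 hj2
    exact bwdPerm_pow f hf hf0 τ j hj2
  · intro w hx hy
    exact bwdPerm_apply_not_mem f hf τ w hy


/-- the equivalence -/
noncomputable def theEquiv (u v : Fin n) (hvu : E v u) :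
    {σ : Perm (Fin n) // (∀ w, E w (σ w)) ∧ σ v = u} ≃
      (Σ P : SPath n E u v,
        {τ : Perm {w : Fin n // ∀ i, P.2.1 i ≠ w} // ∀ a, E a.1 ((τ a) : Fin n)}) :=
  ⟨fwd u v, bwd u v hvu, bwd_fwd u v hvu, fwd_bwd u v hvu⟩

open MvPolynomial in
theorem mu_eq (F : Type) [Field F] (u v : Fin n) (hvu : E v u)
    (σ : {σ : Perm (Fin n) // (∀ w, E w (σ w)) ∧ σ v = u}) :
    ((Equiv.Perm.sign σ.1 : ℤ) : MvPolynomial (Fin n × Fin n) F) *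
        ∏ w, X (w, σ.1 w) =
      X (v, u) *
        (∏ i : Fin (len u v σ.1 σ.2.2),
          -X (pathFun u σ.1 (len u v σ.1 σ.2.2) i.castSucc,
            pathFun u σ.1 (len u v σ.1 σ.2.2) i.succ)) *
        (((Equiv.Perm.sign (σ.1.subtypePerm (p := fun w => ∀ i, pathFun u σ.1 (len u v σ.1 σ.2.2) i ≠ w)
          (not_mem_iff u v σ.1 σ.2.2)) : ℤ) :
            MvPolynomial (Fin n × Fin n) F) *
          ∏ a : {w : Fin n // ∀ i, pathFun u σ.1 (len u v σ.1 σ.2.2) i ≠ w},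
            X (a.1, σ.1 a.1)) := by
  classical
  have hf : Function.Injective (pathFun u σ.1 (len u v σ.1 σ.2.2)) :=
    pathFun_inj u v σ.1 σ.2.2
  have hσ : bwdPerm (pathFun u σ.1 (len u v σ.1 σ.2.2)) hf
      (σ.1.subtypePerm (p := fun w => ∀ i, pathFun u σ.1 (len u v σ.1 σ.2.2) i ≠ w)
          (not_mem_iff u v σ.1 σ.2.2)) = σ.1 :=
    congrArg Subtype.val (bwd_fwd u v hvu σ)
  have hsign : (Equiv.Perm.sign σ.1 : ℤ) =
      (-1) ^ (len u v σ.1 σ.2.2) *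
        (Equiv.Perm.sign (σ.1.subtypePerm (p := fun w => ∀ i, pathFun u σ.1 (len u v σ.1 σ.2.2) i ≠ w)
          (not_mem_iff u v σ.1 σ.2.2)) : ℤ) := by
    have h2 := congrArg (fun p => ((Equiv.Perm.sign p : ℤ))) hσ
    simp only [bwdPerm, map_mul, Equiv.Perm.sign_extendDomain, sign_finRotate,
      Equiv.Perm.sign_ofSubtype] at h2
    rw [← h2]
    push_cast
    ring
  have hsign' : ((Equiv.Perm.sign σ.1 : ℤ) : MvPolynomial (Fin n × Fin n) F) =
      (-1) ^ (len u v σ.1 σ.2.2) *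
        ((Equiv.Perm.sign (σ.1.subtypePerm (p := fun w => ∀ i, pathFun u σ.1 (len u v σ.1 σ.2.2) i ≠ w)
          (not_mem_iff u v σ.1 σ.2.2)) : ℤ) :
          MvPolynomial (Fin n × Fin n) F) := by
    rw [hsign]
    push_cast
    ring
  have hsplit : (∏ a : {w : Fin n // ∀ i, pathFun u σ.1 (len u v σ.1 σ.2.2) i ≠ w},
        (X (a.1, σ.1 a.1) : MvPolynomial (Fin n × Fin n) F)) *
      ∏ x : {w : Fin n // ¬ ∀ i, pathFun u σ.1 (len u v σ.1 σ.2.2) i ≠ w},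
        X (x.1, σ.1 x.1) = ∏ w, X (w, σ.1 w) :=
    Fintype.prod_subtype_mul_prod_subtype _ (fun w => X (w, σ.1 w))
  have hbij : ∏ j : Fin (len u v σ.1 σ.2.2 + 1),
      (X (pathFun u σ.1 (len u v σ.1 σ.2.2) j, σ.1 (pathFun u σ.1 (len u v σ.1 σ.2.2) j)) :
        MvPolynomial (Fin n × Fin n) F) =
      ∏ x : {w : Fin n // ¬ ∀ i, pathFun u σ.1 (len u v σ.1 σ.2.2) i ≠ w},
        X (x.1, σ.1 x.1) := by
    refine Fintype.prod_bijective
      (fun j => ⟨pathFun u σ.1 (len u v σ.1 σ.2.2) j, by push_neg; exact ⟨j, rfl⟩⟩)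
      ⟨fun a b h => hf (congrArg Subtype.val h), ?_⟩ _ _ ?_
    swap
    · intro j
      dsimp only
    rintro ⟨x, hx⟩
    push_neg at hx
    obtain ⟨j, hj⟩ := hx
    exact ⟨j, Subtype.ext hj⟩
  have hpath : ∏ j : Fin (len u v σ.1 σ.2.2 + 1),
      (X (pathFun u σ.1 (len u v σ.1 σ.2.2) j, σ.1 (pathFun u σ.1 (len u v σ.1 σ.2.2) j)) :
        MvPolynomial (Fin n × Fin n) F) =
      (∏ i : Fin (len u v σ.1 σ.2.2),
        X (pathFun u σ.1 (len u v σ.1 σ.2.2) i.castSucc,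
          pathFun u σ.1 (len u v σ.1 σ.2.2) i.succ)) * X (v, u) := by
    rw [Fin.prod_univ_castSucc]
    congr 1
    · exact Finset.prod_congr rfl fun i _ => by rw [pathFun_succ]
    · rw [pathFun_last u v σ.1 σ.2.2, σ.2.2]
  have hneg : ∏ i : Fin (len u v σ.1 σ.2.2),
      (-X (pathFun u σ.1 (len u v σ.1 σ.2.2) i.castSucc,
        pathFun u σ.1 (len u v σ.1 σ.2.2) i.succ) : MvPolynomial (Fin n × Fin n) F) =
      (-1) ^ (len u v σ.1 σ.2.2) *
        ∏ i : Fin (len u v σ.1 σ.2.2),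
          X (pathFun u σ.1 (len u v σ.1 σ.2.2) i.castSucc,
            pathFun u σ.1 (len u v σ.1 σ.2.2) i.succ) := by
    have : ∀ i : Fin (len u v σ.1 σ.2.2),
        (-X (pathFun u σ.1 (len u v σ.1 σ.2.2) i.castSucc,
          pathFun u σ.1 (len u v σ.1 σ.2.2) i.succ) : MvPolynomial (Fin n × Fin n) F) =
        (-1) * X (pathFun u σ.1 (len u v σ.1 σ.2.2) i.castSucc,
          pathFun u σ.1 (len u v σ.1 σ.2.2) i.succ) := fun i => by ring
    rw [Finset.prod_congr rfl (fun i _ => this i), Finset.prod_mul_distrib,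
      Finset.prod_const, Finset.card_univ, Fintype.card_fin]
  rw [hsign', ← hsplit, ← hbij, hpath, hneg]
  ring

end WithE

end CCAux

/-- Cycle covers of `G` are identified with permutations `σ` of the vertex set all of
whose edges `w → σ w` lie in `G`; the signed monomial of a cycle cover is
`μ(𝒞) = sign σ · ∏_w x_{w,σ w}`.
The cycle covers of `G` containing the edge `v → u` (i.e., with `σ v = u`) are in
bijection with pairs `(P, 𝒞')` of a simple `u → v` path `P` and a cycle cover `𝒞'`
of `G[V ∖ V(P)]`; the bijection removes from `𝒞` the cycle `C` through the edge
`v → u` (whose vertices are the `σ`-iterates of `u`) and keeps the rest of `σ`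
unchanged; under it `μ(𝒞) = x_{v,u} · μ(P_C) · μ(𝒞')`, i.e. `μ(C)/x_{v,u} = μ(P_C)`. -/
theorem cycleCovers_through_edge_equiv_path_times_cover
    (n : ℕ) (F : Type) [Field F]
    (E : Fin n → Fin n → Prop) [DecidableRel E] (hloop : ∀ w, E w w)
    (v u : Fin n) (hvu : E v u) :
    ∃ e : {σ : Equiv.Perm (Fin n) // (∀ w, E w (σ w)) ∧ σ v = u} ≃
        (Σ P : SPath n E u v,
          {τ : Equiv.Perm {w : Fin n // ∀ i, P.2.1 i ≠ w} //
            ∀ a, E a.1 ((τ a) : Fin n)}),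
      ∀ σ : {σ : Equiv.Perm (Fin n) // (∀ w, E w (σ w)) ∧ σ v = u},
        -- the remaining cycles are σ unchanged off the path
        (∀ a : {w : Fin n // ∀ i, (e σ).1.2.1 i ≠ w}, (((e σ).2.1 a) : Fin n) = σ.1 a.1) ∧
        -- the path consists of the σ-iterates of u
        (∀ j : Fin (((e σ).1.1 : ℕ) + 1), (e σ).1.2.1 j = (σ.1 ^ (j : ℕ)) u) ∧
        -- μ(𝒞) = x_{v,u} · μ(P) · μ(𝒞')
        ((Equiv.Perm.sign σ.1 : ℤ) : MvPolynomial (Fin n × Fin n) F) *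
            ∏ w, X (w, σ.1 w) =
          X (v, u) *
            (∏ i : Fin (((e σ).1.1 : ℕ)),
              -X ((e σ).1.2.1 i.castSucc, (e σ).1.2.1 i.succ)) *
            (((Equiv.Perm.sign (e σ).2.1 : ℤ) : MvPolynomial (Fin n × Fin n) F) *
              ∏ a : {w : Fin n // ∀ i, (e σ).1.2.1 i ≠ w},
                X (a.1, (((e σ).2.1 a) : Fin n))) := by
  refine ⟨CCAux.theEquiv u v hvu, fun σ => ⟨fun a => rfl, fun j => rfl, ?_⟩⟩
  exact CCAux.mu_eq F u v hvu σ
end
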